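/- arXiv:1006.2687 — 4 statements merged into one kernel-verified Lean document; each statement's English description precedes it below -/
import Mathlib

section
/- Let (b_i), (c_i) be the intersection numbers of a distance-regular graph with diameter D, valency k = b_0, and n vertices, and define φ_0 = n-1 and φ_i = (c_i φ_{i-1} - k)/b_i for 1 ≤ i ≤ D-1. Then for each 0 ≤ i ≤ D-1, φ_i = k·(Σ_{j>i} |K_j|)/e_i, where |K_j| is the number of vertices at distance j from a fixed vertex and e_i = b_i|K_i| is the number of edges between K_i and K_{i+1}. -/
/-! Cleared of denominators, the claim is `φ i * e i = k * ∑_{j > i} K j`. For `i = 0` this is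
`(n - 1) * k = k * (n - K 0)`. Multiplying the recursion by `e (i+1)` and using
`c (i+1) * K (i+1) = e i` gives `φ (i+1) * e (i+1) = φ i * e i - k * K (i+1)`, which
removes exactly the layer `K (i+1)` from the tail sum. -/

open Finset

theorem Finset.sum_Icc_eq_add_sum_Icc_succ {M : Type*} [AddCommMonoid M] (f : ℕ → M)
    {a b : ℕ} (h : a ≤ b) : ∑ j ∈ Icc a b, f j = f a + ∑ j ∈ Icc (a + 1) b, f j := by
  rw [← add_sum_Ioc_eq_sum_Icc h, Icc_add_one_left_eq_Ioc]

section Potentials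

variable {D : ℕ} {n k : ℝ} {b c K φ : ℕ → ℝ}

theorem potential_zero_mul_edges (hk : k = b 0) (hK0 : K 0 = 1)
    (hn : n = ∑ j ∈ range (D + 1), K j) (hφ0 : φ 0 = n - 1) :
    φ 0 * (b 0 * K 0) = k * ∑ j ∈ Icc 1 D, K j := by
  rw [hφ0, hn, Nat.range_succ_eq_Icc_zero, sum_Icc_eq_add_sum_Icc_succ K D.zero_le, hK0, hk]
  ring

theorem potential_succ_mul_edges {i : ℕ} (hbc : c (i + 1) * K (i + 1) = b i * K i)
    (hb : b (i + 1) ≠ 0) (hφ : φ (i + 1) = (c (i + 1) * φ i - k) / b (i + 1)) :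
    φ (i + 1) * (b (i + 1) * K (i + 1)) = φ i * (b i * K i) - k * K (i + 1) := by
  rw [hφ, ← hbc]
  field_simp

theorem potential_mul_edges_eq_tail_sum (hk : k = b 0) (hK0 : K 0 = 1)
    (hn : n = ∑ j ∈ range (D + 1), K j)
    (hbc : ∀ i < D, c (i + 1) * K (i + 1) = b i * K i)
    (hbpos : ∀ i < D, 0 < b i) (hφ0 : φ 0 = n - 1)
    (hφ : ∀ i, 1 ≤ i → i ≤ D - 1 → φ i = (c i * φ (i - 1) - k) / b i) :
    ∀ i ≤ D - 1, φ i * (b i * K i) = k * ∑ j ∈ Icc (i + 1) D, K j := by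
  intro i hi
  induction i with
  | zero => exact potential_zero_mul_edges hk hK0 hn hφ0
  | succ i ih =>
    have hiD : i + 1 ≤ D := by omega
    have hstep := potential_succ_mul_edges (hbc i (by omega)) (hbpos (i + 1) (by omega)).ne'
      (hφ (i + 1) (by omega) hi)
    rw [hstep, ih (by omega), sum_Icc_eq_add_sum_Icc_succ K hiD]
    ring

end Potentials

theorem potentials_eq_layer_formula_general
    (D : ℕ) (hD : 1 ≤ D) (n k : ℝ) (b c K φ : ℕ → ℝ)
    (hk : k = b 0)
    (hK0 : K 0 = 1)
    (hKpos : ∀ i ≤ D, 0 < K i)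
    (hn : n = ∑ j ∈ Finset.range (D + 1), K j)
    (hbc : ∀ i < D, c (i + 1) * K (i + 1) = b i * K i)
    (hbpos : ∀ i < D, 0 < b i)
    (hφ0 : φ 0 = n - 1)
    (hφ : ∀ i, 1 ≤ i → i ≤ D - 1 → φ i = (c i * φ (i - 1) - k) / b i) :
    ∀ i ≤ D - 1, φ i = k * (∑ j ∈ Finset.Icc (i + 1) D, K j) / (b i * K i) := by
  intro i hi
  have he : b i * K i ≠ 0 := (mul_pos (hbpos i (by omega)) (hKpos i (by omega))).ne'
  rw [eq_div_iff he]
  exact potential_mul_edges_eq_tail_sum hk hK0 hn hbc hbpos hφ0 hφ i hi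

/-- In a distance-regular graph with diameter `D`, valency `k = b 0`,
`n` vertices, layer sizes `K i` (number of vertices at distance `i` from a fixed
vertex) and potentials `φ` defined by `φ 0 = n - 1`,
`φ i = (c i * φ (i-1) - k) / b i`, one has
`φ i = k * (∑_{j > i} K j) / e i` where `e i = b i * K i`. -/
theorem potentials_eq_layer_formula
    (D : ℕ) (hD : 1 ≤ D) (n k : ℝ) (b c K φ : ℕ → ℝ)
    (hk : k = b 0) (hk3 : 3 ≤ k)
    (hK0 : K 0 = 1)
    (hKpos : ∀ i ≤ D, 0 < K i)
    (hn : n = ∑ j ∈ Finset.range (D + 1), K j)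
    (hbc : ∀ i < D, c (i + 1) * K (i + 1) = b i * K i)
    (hbpos : ∀ i < D, 0 < b i)
    (hcpos : ∀ i, 1 ≤ i → i ≤ D → 0 < c i)
    (hφ0 : φ 0 = n - 1)
    (hφ : ∀ i, 1 ≤ i → i ≤ D - 1 → φ i = (c i * φ (i - 1) - k) / b i) :
    ∀ i ≤ D - 1, φ i = k * (∑ j ∈ Finset.Icc (i + 1) D, K j) / (b i * K i) :=
  potentials_eq_layer_formula_general D hD n k b c K φ hk hK0 hKpos hn hbc hbpos hφ0 hφ
end

section
/- With the potentials φ_i defined as above on a distance-regular graph of diameter D, one has φ_{D-1} = k/c_D. -/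
/-!
Write `e_i = b_i |K_i| = c_{i+1} |K_{i+1}|` for the number of edges between the distance
layers `K_i` and `K_{i+1}`. Then `φ_i e_i = k (|K_{i+1}| + ⋯ + |K_D|)` for all `i < D`: at `i = 0`
this is `e_0 = k` and `φ_0 = n - 1`, and the recurrence `φ_{i+1} b_{i+1} = c_{i+1} φ_i - k`,
multiplied by `|K_{i+1}|`, turns `c_{i+1} |K_{i+1}|` into `e_i` and removes `k |K_{i+1}|` from the
tail. At `i = D - 1` the tail is `|K_D|` and `e_{D-1} = c_D |K_D|`, so `φ_{D-1} = k / c_D`.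
-/

open Finset

theorem potential_mul_eq_mul_sum_Ioc {D : ℕ} {k : ℝ} {b c K φ : ℕ → ℝ}
    (hbc : ∀ i < D, c (i + 1) * K (i + 1) = b i * K i)
    (hk : b 0 * K 0 = k) (hφ0 : φ 0 = ∑ j ∈ Ioc 0 D, K j)
    (hrec : ∀ i, i + 1 < D → φ (i + 1) * b (i + 1) = c (i + 1) * φ i - k) :
    ∀ i < D, φ i * (b i * K i) = k * ∑ j ∈ Ioc i D, K j
  | 0, _ => by rw [hk, hφ0, mul_comm]
  | i + 1, hi => by
    have ih := potential_mul_eq_mul_sum_Ioc hbc hk hφ0 hrec i (by omega)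
    calc φ (i + 1) * (b (i + 1) * K (i + 1))
        = (c (i + 1) * φ i - k) * K (i + 1) := by rw [← hrec i hi]; ring
      _ = φ i * (b i * K i) - k * K (i + 1) := by rw [← hbc i (by omega)]; ring
      _ = k * ∑ j ∈ Ioc (i + 1) D, K j := by
        rw [ih, ← insert_Ioc_add_one_left_eq_Ioc (by omega : i < D), sum_insert left_notMem_Ioc]
        ring

theorem potential_last_eq_k_div_cD_general
    (D : ℕ) (hD : 1 ≤ D) (n k : ℝ) (b c K φ : ℕ → ℝ)
    (hk : k = b 0)
    (hK0 : K 0 = 1)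
    (hKpos : ∀ i ≤ D, 0 < K i)
    (hn : n = ∑ j ∈ Finset.range (D + 1), K j)
    (hbc : ∀ i < D, c (i + 1) * K (i + 1) = b i * K i)
    (hbpos : ∀ i < D, 0 < b i)
    (hcpos : ∀ i, 1 ≤ i → i ≤ D → 0 < c i)
    (hφ0 : φ 0 = n - 1)
    (hφ : ∀ i, 1 ≤ i → i ≤ D - 1 → φ i = (c i * φ (i - 1) - k) / b i) :
    φ (D - 1) = k / c D := by
  obtain ⟨m, rfl⟩ : ∃ m, D = m + 1 := ⟨D - 1, by omega⟩
  have hφ0' : φ 0 = ∑ j ∈ Ioc 0 (m + 1), K j := by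
    rw [hφ0, hn, Nat.range_succ_eq_Icc_zero, ← add_sum_Ioc_eq_sum_Icc (Nat.zero_le _), hK0]
    ring
  have hrec : ∀ i, i + 1 < m + 1 → φ (i + 1) * b (i + 1) = c (i + 1) * φ i - k := fun i hi => by
    rw [hφ (i + 1) (by omega) (by omega), Nat.add_sub_cancel, div_mul_cancel₀ _ (hbpos _ hi).ne']
  have hlast := potential_mul_eq_mul_sum_Ioc hbc (by rw [hK0, hk, mul_one]) hφ0' hrec m (by omega)
  rw [← hbc m (by omega), Nat.Ioc_succ_singleton, sum_singleton, ← mul_assoc] at hlast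
  rw [Nat.add_sub_cancel, eq_div_iff (hcpos _ (by omega) le_rfl).ne']
  exact mul_right_cancel₀ (hKpos _ le_rfl).ne' hlast

/-- With the potentials `φ` of a distance-regular graph of diameter `D`,
one has `φ (D-1) = k / c D`. -/
theorem potential_last_eq_k_div_cD
    (D : ℕ) (hD : 1 ≤ D) (n k : ℝ) (b c K φ : ℕ → ℝ)
    (hk : k = b 0) (hk3 : 3 ≤ k)
    (hK0 : K 0 = 1)
    (hKpos : ∀ i ≤ D, 0 < K i)
    (hn : n = ∑ j ∈ Finset.range (D + 1), K j)
    (hbc : ∀ i < D, c (i + 1) * K (i + 1) = b i * K i)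
    (hbpos : ∀ i < D, 0 < b i)
    (hcpos : ∀ i, 1 ≤ i → i ≤ D → 0 < c i)
    (hφ0 : φ 0 = n - 1)
    (hφ : ∀ i, 1 ≤ i → i ≤ D - 1 → φ i = (c i * φ (i - 1) - k) / b i) :
    φ (D - 1) = k / c D :=
  potential_last_eq_k_div_cD_general D hD n k b c K φ hk hK0 hKpos hn hbc hbpos hcpos hφ0 hφ
end

section
/- Let D ≤ 5 and b_1 ≥ 5. Then for the potentials of a distance-regular graph, (φ_1 + ... + φ_{D-1})/φ_0 ≤ 4/b_1 ≤ 0.8. -/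
/-!
Since the potentials decrease, each of `φ 1, …, φ (D-1)` is at most `φ 1`, so the sum is at
most `(D - 1) φ 1 ≤ 4 φ 1`, and `b₁ φ 1 < φ 0` turns this into `4 φ 0 / b₁`.
-/

open Finset

theorem sum_Icc_one_le_nsmul {M : Type*} [AddCommMonoid M] [PartialOrder M]
    [IsOrderedAddMonoid M] {φ : ℕ → M} {n : ℕ} (h : ∀ i, i + 1 ≤ n → φ (i + 1) ≤ φ i) :
    ∑ i ∈ Icc 1 n, φ i ≤ n • φ 1 := by
  have hanti : AntitoneOn φ (Set.Icc 1 n) :=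
    antitoneOn_of_add_one_le Set.ordConnected_Icc fun i _ _ hi => h i hi.2
  have hle : ∀ i ∈ Icc 1 n, φ i ≤ φ 1 := fun i hi => by
    rw [mem_Icc] at hi
    exact hanti ⟨le_rfl, hi.1.trans hi.2⟩ ⟨hi.1, hi.2⟩ hi.1
  simpa using sum_le_card_nsmul _ _ _ hle

theorem mul_le_mul_of_le_of_nonneg_of_le {R : Type*} [Ring R] [LinearOrder R]
    [IsStrictOrderedRing R] {n c x y : R} (hn : 0 ≤ n) (hnc : n ≤ c) (hxy : x ≤ y) (hy : 0 ≤ y) :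
    n * x ≤ c * y := by
  rcases le_total 0 x with hx | hx
  · exact mul_le_mul hnc hxy hx (hn.trans hnc)
  · exact (mul_nonpos_of_nonneg_of_nonpos hn hx).trans (mul_nonneg (hn.trans hnc) hy)

theorem small_diameter_bound_general
    (D : ℕ) (hD5 : D ≤ 5)
    (b1 : ℝ) (hb1 : 5 ≤ b1)
    (φ : ℕ → ℝ)
    (hφpos : ∀ i ≤ D - 1, 0 < φ i)
    (hφdec : ∀ i, i + 1 ≤ D - 1 → φ (i + 1) < φ i)
    (hφ1 : φ 1 * b1 < φ 0) :
    (∑ i ∈ Finset.Icc 1 (D - 1), φ i) / φ 0 ≤ 4 / b1 ∧ 4 / b1 ≤ 0.8 := by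
  have hφ0 : 0 < φ 0 := hφpos 0 (Nat.zero_le _)
  have hb1pos : 0 < b1 := by linarith
  have hsum : ∑ i ∈ Icc 1 (D - 1), φ i ≤ ((D - 1 : ℕ) : ℝ) * φ 1 := by
    simpa only [nsmul_eq_mul] using sum_Icc_one_le_nsmul fun i hi => (hφdec i hi).le
  have hcount : ((D - 1 : ℕ) : ℝ) ≤ 4 := by exact_mod_cast (by omega : D - 1 ≤ 4)
  refine ⟨?_, by rw [div_le_iff₀ hb1pos]; norm_num; linarith⟩
  rw [div_le_div_iff₀ hφ0 hb1pos]
  calc (∑ i ∈ Icc 1 (D - 1), φ i) * b1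
      ≤ ((D - 1 : ℕ) : ℝ) * φ 1 * b1 := by gcongr
    _ = ((D - 1 : ℕ) : ℝ) * (φ 1 * b1) := mul_assoc _ _ _
    _ ≤ 4 * φ 0 := mul_le_mul_of_le_of_nonneg_of_le (Nat.cast_nonneg _) hcount hφ1.le hφ0.le

/-- If `D ≤ 5` and `b 1 ≥ 5`, then the potentials of a distance-regular
graph satisfy `(φ 1 + ... + φ (D-1)) / φ 0 ≤ 4 / b1 ≤ 0.8`. -/
theorem small_diameter_bound
    (D : ℕ) (hD : 1 ≤ D) (hD5 : D ≤ 5)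
    (b1 : ℝ) (hb1 : 5 ≤ b1)
    (φ : ℕ → ℝ)
    (hφpos : ∀ i ≤ D - 1, 0 < φ i)
    (hφdec : ∀ i, i + 1 ≤ D - 1 → φ (i + 1) < φ i)
    (hφ1 : φ 1 * b1 < φ 0) :
    (∑ i ∈ Finset.Icc 1 (D - 1), φ i) / φ 0 ≤ 4 / b1 ∧ 4 / b1 ≤ 0.8 :=
  small_diameter_bound_general D hD5 b1 hb1 φ hφpos hφdec hφ1
end

section
/- Suppose b_1 ≥ 5, j ≥ 4, c_2 = 1, and b_2/c_2 ≥ 3, and for all 2 ≤ i < j we have c_i/b_i ≤ (b_1−2)/(b_1−1), with D ≤ 3j−1. Then with α = (b_1−2)/(b_1−1), the sum of potential ratios satisfies (φ_1+...+φ_{D-1})/φ_0 < (b_1+2)/(3b_1) + (−2)/(3 b_1 α^{5/2} e ln α), and for b_1 ≥ 5 this bound is less than 0.87. -/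
/-!
For `i ≥ 2` the potentials decay geometrically with ratio `α` up to index `j - 1` and do not
increase afterwards. With `φ₂ < φ₀/(3 b₁)` and `1/(1 - α) = b₁ - 1` this bounds
`φ₂ + ⋯ + φ_{D-1}` by `φ₀/(3 b₁) · (b₁ - 1 + (2j - 1) α^{j-3})`, while `φ₁ < φ₀/b₁`.
The factor `(2j - 1) α^{j-3}` is bounded uniformly in `j` through `x αˣ ≤ 1/(e · (-log α))`,
the maximum of `t e^{-t}`. For the numerical bound put `s = √α ≥ 0.866`: then
`-log α ≥ 2(1 - s)` and `b₁ = (2 - s²)/(1 - s²)`, which reduce the claim to a polynomial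
inequality in `s`.
-/

open Finset Real

lemma mul_rpow_le_one_div_exp_mul_neg_log {a : ℝ} (ha0 : 0 < a) (ha1 : a < 1) (x : ℝ) :
    x * a ^ x ≤ 1 / (exp 1 * -log a) := by
  have hL : 0 < -log a := neg_pos.2 (log_neg ha0 ha1)
  rw [rpow_def_of_pos ha0, le_div_iff₀ (by positivity)]
  calc x * exp (log a * x) * (exp 1 * -log a)
      = x * -log a * exp (-(x * -log a)) * exp 1 := by ring_nf
    _ ≤ exp (-1) * exp 1 := by gcongr; exact mul_exp_neg_le_exp_neg_one _
    _ = 1 := by rw [← exp_add]; simp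

lemma two_mul_sub_one_mul_pow_le {a : ℝ} (ha0 : 0 < a) (ha1 : a < 1) {j : ℕ} (hj : 3 ≤ j) :
    (2 * j - 1) * a ^ (j - 3) ≤ 2 / (a ^ ((5 : ℝ) / 2) * exp 1 * -log a) := by
  have hL : 0 < -log a := neg_pos.2 (log_neg ha0 ha1)
  have hpow : a ^ ((j : ℝ) - 1 / 2) = a ^ (j - 3) * a ^ ((5 : ℝ) / 2) := by
    rw [← rpow_natCast, ← rpow_add ha0, Nat.cast_sub hj]
    congr 1
    push_cast
    ring
  have h := mul_rpow_le_one_div_exp_mul_neg_log ha0 ha1 ((j : ℝ) - 1 / 2)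
  rw [hpow, le_div_iff₀ (by positivity)] at h
  rw [le_div_iff₀ (by positivity)]
  linarith

lemma le_mul_pow_min_sub {φ : ℕ → ℝ} {a : ℝ} (ha : 0 ≤ a) {n k m : ℕ}
    (hratio : ∀ i, n ≤ i → i < k → i < m → φ (i + 1) ≤ a * φ i)
    (hanti : ∀ i, k ≤ i → i < m → φ (i + 1) ≤ φ i) {i : ℕ} (hni : n ≤ i) (him : i ≤ m) :
    φ i ≤ φ n * a ^ (min i k - n) := by
  induction i, hni using Nat.le_induction with
  | base => simp
  | succ i hni ih =>
    have ih := ih (by omega)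
    rcases lt_or_ge i k with hik | hki
    · rw [show min (i + 1) k - n = min i k - n + 1 by omega, pow_succ]
      calc φ (i + 1) ≤ a * φ i := hratio i hni hik (by omega)
        _ ≤ a * (φ n * a ^ (min i k - n)) := by gcongr
        _ = _ := by ring
    · rw [show min (i + 1) k = min i k by omega]
      exact (hanti i hki (by omega)).trans ih

lemma sum_Icc_pow_sub_le {a : ℝ} (ha0 : 0 ≤ a) (ha1 : a < 1) (n m : ℕ) :
    ∑ i ∈ Icc n m, a ^ (i - n) ≤ 1 / (1 - a) := by
  rw [← Ico_add_one_right_eq_Icc, sum_Ico_eq_sum_range]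
  simp only [Nat.add_sub_cancel_left]
  calc ∑ l ∈ range (m + 1 - n), a ^ l ≤ a ^ 0 / (1 - a) := by
        rw [range_eq_Ico]; exact geom_sum_Ico_le_of_lt_one ha0 ha1
    _ = 1 / (1 - a) := by rw [pow_zero]

lemma sum_Icc_pow_min_sub_le {a : ℝ} (ha0 : 0 ≤ a) (ha1 : a < 1) (n k m : ℕ) :
    ∑ i ∈ Icc n m, a ^ (min i k - n) ≤ 1 / (1 - a) + (m - k : ℕ) * a ^ (k - n) := by
  have hterm : ∀ i ∈ Icc n m,
      a ^ (min i k - n) ≤ a ^ (i - n) + if k < i then a ^ (k - n) else 0 := by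
    intro i _
    split_ifs with hki
    · rw [min_eq_right hki.le]
      linarith [pow_nonneg ha0 (i - n)]
    · rw [min_eq_left (not_lt.1 hki), add_zero]
  have hcount : #{i ∈ Icc n m | k < i} ≤ m - k := by
    refine (card_le_card fun i hi => ?_).trans (Nat.card_Ioc k m).le
    simp only [mem_filter, mem_Icc, mem_Ioc] at hi ⊢
    omega
  calc _ ≤ ∑ i ∈ Icc n m, (a ^ (i - n) + if k < i then a ^ (k - n) else 0) := sum_le_sum hterm
    _ = ∑ i ∈ Icc n m, a ^ (i - n) + #{i ∈ Icc n m | k < i} * a ^ (k - n) := by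
        rw [sum_add_distrib, sum_ite, sum_const_zero, add_zero, sum_const, nsmul_eq_mul]
    _ ≤ _ := by
        gcongr
        exact sum_Icc_pow_sub_le ha0 ha1 n m

lemma sum_Icc_le_of_ratio_le {φ : ℕ → ℝ} {a c : ℝ} (ha0 : 0 ≤ a) (ha1 : a < 1) {n k m : ℕ}
    (hc : 0 ≤ c) (hn : φ n ≤ c)
    (hratio : ∀ i, n ≤ i → i < k → i < m → φ (i + 1) ≤ a * φ i)
    (hanti : ∀ i, k ≤ i → i < m → φ (i + 1) ≤ φ i) :
    ∑ i ∈ Icc n m, φ i ≤ c * (1 / (1 - a) + (m - k : ℕ) * a ^ (k - n)) :=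
  calc ∑ i ∈ Icc n m, φ i ≤ ∑ i ∈ Icc n m, φ n * a ^ (min i k - n) :=
        sum_le_sum fun i hi =>
          le_mul_pow_min_sub ha0 hratio hanti (mem_Icc.1 hi).1 (mem_Icc.1 hi).2
    _ ≤ ∑ i ∈ Icc n m, c * a ^ (min i k - n) := by gcongr
    _ ≤ c * (1 / (1 - a) + (m - k : ℕ) * a ^ (k - n)) := by
        rw [← mul_sum]
        exact mul_le_mul_of_nonneg_left (sum_Icc_pow_min_sub_le ha0 ha1 n k m) hc

lemma sub_two_div_sub_one_pos {b : ℝ} (hb : 2 < b) : 0 < (b - 2) / (b - 1) :=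
  div_pos (by linarith) (by linarith)

lemma sub_two_div_sub_one_lt_one {b : ℝ} (hb : 1 < b) : (b - 2) / (b - 1) < 1 := by
  rw [div_lt_one (by linarith)]
  linarith

lemma one_div_one_sub_sub_two_div_sub_one {b : ℝ} (hb : b ≠ 1) :
    1 / (1 - (b - 2) / (b - 1)) = b - 1 := by
  field_simp [sub_ne_zero.2 hb]
  ring

noncomputable def ratioSumTail (b₁ : ℝ) : ℝ :=
  (-2) / (3 * b₁ * ((b₁ - 2) / (b₁ - 1)) ^ ((5 : ℝ) / 2) * exp 1 * log ((b₁ - 2) / (b₁ - 1)))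

noncomputable def ratioSumBound (b₁ : ℝ) : ℝ := (b₁ + 2) / (3 * b₁) + ratioSumTail b₁

lemma ratioSumTail_eq (b₁ : ℝ) :
    ratioSumTail b₁ = 2 / (3 * b₁ * ((b₁ - 2) / (b₁ - 1)) ^ ((5 : ℝ) / 2) * exp 1 *
      -log ((b₁ - 2) / (b₁ - 1))) := by
  rw [ratioSumTail, mul_neg, div_neg, neg_div]

lemma ratioSumTail_pos {b₁ : ℝ} (hb₁ : 2 < b₁) : 0 < ratioSumTail b₁ := by
  have ha0 := sub_two_div_sub_one_pos hb₁
  have hL := neg_pos.2 (log_neg ha0 (sub_two_div_sub_one_lt_one (by linarith)))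
  have := rpow_pos_of_pos ha0 ((5 : ℝ) / 2)
  rw [ratioSumTail_eq]
  positivity

lemma two_mul_sub_one_mul_pow_le_ratioSumTail {b₁ : ℝ} (hb₁ : 2 < b₁) {j : ℕ} (hj : 3 ≤ j) :
    (2 * j - 1) * ((b₁ - 2) / (b₁ - 1)) ^ (j - 3) ≤ 3 * b₁ * ratioSumTail b₁ := by
  convert two_mul_sub_one_mul_pow_le (sub_two_div_sub_one_pos hb₁)
    (sub_two_div_sub_one_lt_one (by linarith)) hj using 1
  rw [ratioSumTail_eq]
  field_simp

lemma sum_Icc_two_le_of_ratio_le {φ : ℕ → ℝ} {b₁ c : ℝ} (hb₁ : 2 < b₁) {j m : ℕ}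
    (hj : 3 ≤ j) (hm : m + 2 ≤ 3 * j) (hc : 0 ≤ c) (h2 : φ 2 ≤ c)
    (hratio : ∀ i, 2 ≤ i → i < j - 1 → i < m → φ (i + 1) ≤ (b₁ - 2) / (b₁ - 1) * φ i)
    (hanti : ∀ i, j - 1 ≤ i → i < m → φ (i + 1) ≤ φ i) :
    ∑ i ∈ Icc 2 m, φ i ≤ c * (b₁ - 1 + 3 * b₁ * ratioSumTail b₁) := by
  have ha0 := sub_two_div_sub_one_pos hb₁
  have hsum := sum_Icc_le_of_ratio_le ha0.le (sub_two_div_sub_one_lt_one (by linarith)) hc h2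
    hratio hanti
  rw [show j - 1 - 2 = j - 3 by omega, one_div_one_sub_sub_two_div_sub_one (by linarith)] at hsum
  have hcount : ((m - (j - 1) : ℕ) : ℝ) ≤ 2 * j - 1 := by
    have : ((m - (j - 1) : ℕ) : ℝ) + 1 ≤ 2 * j := by
      exact_mod_cast (by omega : m - (j - 1) + 1 ≤ 2 * j)
    linarith
  refine hsum.trans ?_
  gcongr c * (_ + ?_)
  exact (mul_le_mul_of_nonneg_right hcount (pow_nonneg ha0.le _)).trans
    (two_mul_sub_one_mul_pow_le_ratioSumTail hb₁ hj)

lemma two_mul_one_sub_sqrt_le_neg_log {a : ℝ} (ha : 0 < a) : 2 * (1 - √a) ≤ -log a := by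
  have h := log_le_sub_one_of_pos (sqrt_pos.2 ha)
  rw [log_sqrt ha.le] at h
  linarith

lemma rpow_five_halves_eq_sqrt_pow {a : ℝ} (ha : 0 ≤ a) : a ^ ((5 : ℝ) / 2) = √a ^ 5 := by
  rw [sqrt_eq_rpow, ← rpow_mul_natCast ha]
  norm_num

lemma one_add_lt_mul_pow_five_mul {s : ℝ} (hs : 0.866 ≤ s) :
    1 + s < 2.718 * s ^ 5 * (1.22 + 0.39 * s ^ 2) := by
  have h2 : 0.7499 ≤ s ^ 2 := by nlinarith
  have h4 : 0.5624 ≤ s ^ 4 := by nlinarith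
  have h : 0.5624 * s * (1.22 + 0.39 * 0.7499) ≤ s ^ 4 * s * (1.22 + 0.39 * s ^ 2) := by
    gcongr
  nlinarith

lemma ratioSumBound_lt {b₁ : ℝ} (hb₁ : 5 ≤ b₁) : ratioSumBound b₁ < 0.87 := by
  set a := (b₁ - 2) / (b₁ - 1) with ha
  set s := √a
  have ha0 : 0 < a := sub_two_div_sub_one_pos (by linarith)
  have hs2 : s ^ 2 = a := sq_sqrt ha0.le
  have hb₁s : b₁ * (1 - s ^ 2) = 2 - s ^ 2 := by
    rw [hs2, ha]; field_simp [show b₁ - 1 ≠ 0 by linarith]; ring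
  have hs : 0.866 ≤ s := by
    rw [le_sqrt (by norm_num) ha0.le, ha, le_div_iff₀ (by linarith)]; linarith
  have hs1 : s < 1 := by nlinarith [sub_two_div_sub_one_lt_one (by linarith : 1 < b₁)]
  have hlog : 2.718 * (2 * (1 - s)) ≤ exp 1 * -log a :=
    mul_le_mul (by linarith [exp_one_gt_d9]) (two_mul_one_sub_sqrt_le_neg_log ha0)
      (by linarith) (exp_pos 1).le
  have htail : ratioSumTail b₁ ≤ 1 / (3 * b₁ * (2.718 * s ^ 5 * (1 - s))) :=
    calc ratioSumTail b₁ = 2 / (3 * b₁ * s ^ 5 * (exp 1 * -log a)) := by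
          rw [ratioSumTail_eq, rpow_five_halves_eq_sqrt_pow ha0.le, mul_assoc _ (exp 1)]
      _ ≤ 2 / (3 * b₁ * s ^ 5 * (2.718 * (2 * (1 - s)))) := by gcongr
      _ = 1 / (3 * b₁ * (2.718 * s ^ 5 * (1 - s))) := by field_simp
  have hkey : 1 < 2.718 * s ^ 5 * (1 - s) * (1.61 * b₁ - 2) := by
    have hfactor : 2.718 * s ^ 5 * (1 - s) * (1.61 * b₁ - 2) * (1 + s) =
        2.718 * s ^ 5 * (1.22 + 0.39 * s ^ 2) := by
      linear_combination (2.718 * s ^ 5 * 1.61) * hb₁s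
    nlinarith [one_add_lt_mul_pow_five_mul hs]
  calc ratioSumBound b₁ ≤ (b₁ + 2) / (3 * b₁) + 1 / (3 * b₁ * (2.718 * s ^ 5 * (1 - s))) :=
        (add_le_add_iff_left _).2 htail
    _ < 0.87 := by
        rw [div_add_div _ _ (by positivity) (by positivity), div_lt_iff₀ (by positivity)]
        nlinarith

/-- Case `b1 ≥ 5`, `j ≥ 4`, `c 2 = 1`, `b2/c2 ≥ 3`: with
`α = (b1 - 2)/(b1 - 1)`, the ratio sum of potentials is bounded by
`(b1 + 2)/(3 b1) + (-2)/(3 b1 α^{5/2} e ln α)`, and this bound is `< 0.87`. -/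
theorem case_fade_subcase_one_bound
    (b1 : ℝ) (hb1 : 5 ≤ b1)
    (j D : ℕ) (hj : 4 ≤ j) (hD : D ≤ 3 * j - 1)
    (φ : ℕ → ℝ)
    (hφpos : ∀ i ≤ D - 1, 0 < φ i)
    (hφdec : ∀ i, i + 1 ≤ D - 1 → φ (i + 1) < φ i)
    (hr1 : φ 1 / φ 0 < 1 / b1)
    (hr2 : φ 2 / φ 1 ≤ 1 / 3)
    (hri : ∀ i, 2 ≤ i → i + 1 < j → φ (i + 1) / φ i ≤ (b1 - 2) / (b1 - 1)) :
    (∑ i ∈ Finset.Icc 1 (D - 1), φ i) / φ 0 <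
      (b1 + 2) / (3 * b1) +
        (-2) / (3 * b1 * ((b1 - 2) / (b1 - 1)) ^ ((5 : ℝ) / 2) * Real.exp 1 *
          Real.log ((b1 - 2) / (b1 - 1))) ∧
    (b1 + 2) / (3 * b1) +
        (-2) / (3 * b1 * ((b1 - 2) / (b1 - 1)) ^ ((5 : ℝ) / 2) * Real.exp 1 *
          Real.log ((b1 - 2) / (b1 - 1))) < 0.87 := by
  refine ⟨?_, ratioSumBound_lt hb1⟩
  change _ < ratioSumBound b1
  have hb1pos : 0 < b1 := by linarith
  have hφ0 : 0 < φ 0 := hφpos 0 (Nat.zero_le _)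
  have hT := ratioSumTail_pos (by linarith : 2 < b1)
  rw [div_lt_iff₀ hφ0]
  rcases Nat.eq_zero_or_pos (D - 1) with hm | hm
  · rw [hm, Icc_eq_empty (by omega), sum_empty, ratioSumBound]
    positivity
  have hφ1 : φ 1 < φ 0 / b1 := by
    rwa [div_lt_div_iff₀ hφ0 hb1pos, one_mul, ← lt_div_iff₀ hb1pos] at hr1
  have hφ2 : φ 2 ≤ φ 0 / (3 * b1) := by
    rw [div_le_iff₀ (hφpos 1 hm)] at hr2
    calc φ 2 ≤ φ 1 / 3 := by linarith
      _ ≤ φ 0 / b1 / 3 := by gcongr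
      _ = φ 0 / (3 * b1) := by ring
  have hS := sum_Icc_two_le_of_ratio_le (j := j) (m := D - 1) (by linarith) (by omega)
    (by omega) (by positivity) hφ2
    (fun i h2i hij him => (div_le_iff₀ (hφpos i (by omega))).1 (hri i h2i (by omega)))
    (fun i hji him => (hφdec i (by omega)).le)
  have hid : φ 0 / b1 + φ 0 / (3 * b1) * (b1 - 1 + 3 * b1 * ratioSumTail b1) =
      ratioSumBound b1 * φ 0 := by
    rw [ratioSumBound]
    field_simp
    ring
  rw [← add_sum_Ioc_eq_sum_Icc hm, ← show Icc 2 (D - 1) = Ioc 1 (D - 1) from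
    Icc_add_one_left_eq_Ioc 1 _]
  linarith
end
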